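/- arXiv:2410.18315 — 3 statements merged into one kernel-verified Lean document; each statement's English description precedes it below -/
import Mathlib

section
/- For real numbers x, y ≥ 0, the inequality sinh(x/2)·sinh(y/2) < 1 holds if and only if tanh²(x/2) + tanh²(y/2) < 1. -/
open Real

/-- For `x, y ≥ 0`, `sinh(x/2)·sinh(y/2) < 1 ↔ tanh²(x/2) + tanh²(y/2) < 1`. -/
theorem stmt3 (x y : ℝ) (hx : 0 ≤ x) (hy : 0 ≤ y) :
    sinh (x / 2) * sinh (y / 2) < 1 ↔ tanh (x / 2) ^ 2 + tanh (y / 2) ^ 2 < 1 := by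
  have ha : 0 ≤ sinh (x / 2) := by positivity
  have hb : 0 ≤ sinh (y / 2) := by positivity
  have hca : cosh (x / 2) ^ 2 = 1 + sinh (x / 2) ^ 2 := by
    have := cosh_sq (x / 2); linarith
  have hcb : cosh (y / 2) ^ 2 = 1 + sinh (y / 2) ^ 2 := by
    have := cosh_sq (y / 2); linarith
  have hcan : cosh (x / 2) ≠ 0 := ne_of_gt (cosh_pos _)
  have hcbn : cosh (y / 2) ≠ 0 := ne_of_gt (cosh_pos _)
  rw [Real.tanh_eq_sinh_div_cosh, Real.tanh_eq_sinh_div_cosh]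
  rw [div_pow, div_pow, div_add_div _ _ (pow_ne_zero 2 hcan) (pow_ne_zero 2 hcbn),
    div_lt_one (by positivity)]
  constructor <;> intro h <;> nlinarith [sq_nonneg (sinh (x/2) * sinh (y/2)),
    mul_nonneg ha hb, sq_nonneg (sinh (x/2) - sinh (y/2))]
end

section
/- For all real numbers r ≥ ε > 0, with η(r,ε) = 2 sinh³(ε/2)·csch(r + ε/2), one has 0 < η(r,ε) < cosh(r) − 1, so that cosh(r) − η(r,ε) > 1 and hence cosh⁻¹(cosh(r) − η(r,ε)) < r; consequently δ(r,ε) = min{ε, r − cosh⁻¹(cosh(r) − η(r,ε))} > 0. -/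
open Real

/-- The inverse hyperbolic cosine on `[1, ∞)`. -/
noncomputable def arcosh (x : ℝ) : ℝ := Real.log (x + Real.sqrt (x ^ 2 - 1))

lemma arcosh_lt (x r : ℝ) (hr : 0 < r) (hx : 1 < x) (hxr : x < cosh r) : _root_.arcosh x < r := by
  have hsr : 0 < sinh r := Real.sinh_pos_iff.2 hr
  have hsq : Real.sqrt (x ^ 2 - 1) < sinh r := by
    have h1 : x ^ 2 - 1 < sinh r ^ 2 := by
      have := Real.cosh_sq r
      nlinarith
    have h2 : Real.sqrt (x ^ 2 - 1) < Real.sqrt (sinh r ^ 2) :=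
      Real.sqrt_lt_sqrt (by nlinarith) h1
    rwa [Real.sqrt_sq hsr.le] at h2
  have hy : x + Real.sqrt (x ^ 2 - 1) < exp r := by
    have : cosh r + sinh r = exp r := by
      rw [Real.cosh_eq, Real.sinh_eq]; ring
    linarith
  have hy0 : 0 < x + Real.sqrt (x ^ 2 - 1) := by
    have := Real.sqrt_nonneg (x ^ 2 - 1); linarith
  calc _root_.arcosh x = Real.log (x + Real.sqrt (x ^ 2 - 1)) := rfl
    _ < Real.log (exp r) := Real.log_lt_log hy0 hy
    _ = r := Real.log_exp r

/-- For `r ≥ ε > 0` and `η(r,ε) = 2 sinh³(ε/2)·csch(r + ε/2)`: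
`0 < η(r,ε) < cosh r − 1`, hence `cosh r − η(r,ε) > 1`,
`arcosh(cosh r − η(r,ε)) < r`, and
`δ(r,ε) = min{ε, r − arcosh(cosh r − η(r,ε))} > 0`. -/
theorem stmt9 (r ε : ℝ) (hε : 0 < ε) (hr : ε ≤ r) :
    0 < 2 * sinh (ε / 2) ^ 3 * (sinh (r + ε / 2))⁻¹ ∧
    2 * sinh (ε / 2) ^ 3 * (sinh (r + ε / 2))⁻¹ < cosh r - 1 ∧
    1 < cosh r - 2 * sinh (ε / 2) ^ 3 * (sinh (r + ε / 2))⁻¹ ∧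
    _root_.arcosh (cosh r - 2 * sinh (ε / 2) ^ 3 * (sinh (r + ε / 2))⁻¹) < r ∧
    0 < min ε (r - _root_.arcosh (cosh r - 2 * sinh (ε / 2) ^ 3 * (sinh (r + ε / 2))⁻¹)) := by
  have hs1 : 0 < sinh (ε / 2) := Real.sinh_pos_iff.2 (by linarith)
  have hs2 : 0 < sinh (r + ε / 2) := Real.sinh_pos_iff.2 (by linarith)
  have hpos : 0 < 2 * sinh (ε / 2) ^ 3 * (sinh (r + ε / 2))⁻¹ := by positivity
  have hcosh : cosh r - 1 = 2 * sinh (r / 2) ^ 2 := by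
    have h1 : cosh (2 * (r / 2)) = cosh (r / 2) ^ 2 + sinh (r / 2) ^ 2 := Real.cosh_two_mul _
    have h2 : cosh (r / 2) ^ 2 = sinh (r / 2) ^ 2 + 1 := by
      have := Real.cosh_sq (r / 2); linarith
    have : (2 : ℝ) * (r / 2) = r := by ring
    rw [this] at h1
    linarith
  have hm1 : sinh (ε / 2) ≤ sinh (r / 2) := Real.sinh_le_sinh.2 (by linarith)
  have hm2 : sinh (ε / 2) < sinh (r + ε / 2) := Real.sinh_lt_sinh.2 (by linarith)
  have hlt : 2 * sinh (ε / 2) ^ 3 * (sinh (r + ε / 2))⁻¹ < cosh r - 1 := by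
    rw [hcosh, mul_inv_lt_iff₀' hs2]
    have hs3 : 0 < sinh (r / 2) := Real.sinh_pos_iff.2 (by linarith)
    have h2 : sinh (ε / 2) ^ 2 ≤ sinh (r / 2) ^ 2 := by nlinarith
    have hA : sinh (ε / 2) ^ 2 * sinh (ε / 2) ≤ sinh (r / 2) ^ 2 * sinh (ε / 2) :=
      mul_le_mul_of_nonneg_right h2 hs1.le
    have hB : sinh (r / 2) ^ 2 * sinh (ε / 2) < sinh (r / 2) ^ 2 * sinh (r + ε / 2) :=
      mul_lt_mul_of_pos_left hm2 (pow_pos hs3 2)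
    nlinarith
  have h1lt : 1 < cosh r - 2 * sinh (ε / 2) ^ 3 * (sinh (r + ε / 2))⁻¹ := by linarith
  have harc : _root_.arcosh (cosh r - 2 * sinh (ε / 2) ^ 3 * (sinh (r + ε / 2))⁻¹) < r :=
    arcosh_lt _ r (by linarith) h1lt (by linarith)
  exact ⟨hpos, hlt, h1lt, harc, lt_min hε (by linarith)⟩
end

section
/- Let BCD be a triangle in the hyperbolic plane with side lengths satisfying CD ≥ ε and BD ≤ BC, and let A be the point on segment BD with AB = ε/2 (and AD = BD − ε/2 ≥ 0). Then cosh(AC) − cosh(AD) > 2 sinh³(ε/2)·csch(AC + ε/2). In particular AC > AD. -/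
open Real UpperHalfPlane

noncomputable def rotM (θ : ℝ) : Matrix.SpecialLinearGroup (Fin 2) ℝ :=
  ⟨!![Real.cos θ, Real.sin θ; -Real.sin θ, Real.cos θ], by
    rw [Matrix.det_fin_two_of]
    linear_combination Real.sin_sq_add_cos_sq θ⟩

lemma rotM_smul (θ : ℝ) (z : ℍ) :
    ((rotM θ • z : ℍ) : ℂ) = ((cos θ : ℂ) * z + sin θ) / ((-sin θ : ℂ) * z + cos θ) := by
  rw [specialLinearGroup_apply]
  simp [rotM, coe_mk]

lemma rot_denom_ne (θ : ℝ) (z : ℍ) : ((-sin θ : ℂ) * z + cos θ) ≠ 0 := by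
  intro h
  have h1 := congrArg Complex.im h
  have h2 := congrArg Complex.re h
  simp only [Complex.add_im, Complex.add_re, Complex.mul_im, Complex.mul_re, Complex.neg_im,
    Complex.neg_re, Complex.ofReal_im, Complex.ofReal_re, Complex.zero_im, Complex.zero_re,
    coe_im, coe_re] at h1 h2
  have hs : sin θ = 0 := by
    rcases mul_eq_zero.1 (by linarith : sin θ * z.im = 0) with h | h
    · exact h
    · exact absurd h z.im_ne_zero
  rw [hs] at h2
  nlinarith [Real.sin_sq_add_cos_sq θ]

lemma rotM_fix_I (θ : ℝ) : rotM θ • I = I := by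
  ext
  rw [rotM_smul, coe_I, div_eq_iff (by simpa [coe_I] using rot_denom_ne θ I)]
  apply Complex.ext <;> simp

lemma rot_re_mul (θ : ℝ) (w : ℍ) :
    (rotM θ • w).re * Complex.normSq ((-sin θ : ℂ) * w + cos θ)
      = cos θ * sin θ * (1 - w.re ^ 2 - w.im ^ 2) + (cos θ ^ 2 - sin θ ^ 2) * w.re := by
  rw [← coe_re, rotM_smul, Complex.div_re, ← add_div, div_mul_cancel₀ _
    (Complex.normSq_pos.2 (rot_denom_ne θ w)).ne']
  simp only [Complex.normSq_apply, Complex.add_re, Complex.add_im, Complex.mul_re, Complex.mul_im,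
    Complex.neg_re, Complex.neg_im, Complex.ofReal_re, Complex.ofReal_im, coe_re, coe_im]
  ring

lemma exists_rot_re_zero (w : ℍ) : ∃ θ, (rotM θ • w).re = 0 := by
  have key : ∀ θ, cos θ * sin θ * (1 - w.re ^ 2 - w.im ^ 2)
      + (cos θ ^ 2 - sin θ ^ 2) * w.re = 0 → (rotM θ • w).re = 0 := by
    intro θ h
    have h2 := rot_re_mul θ w
    rw [h] at h2
    exact (mul_eq_zero.1 h2).resolve_right (Complex.normSq_pos.2 (rot_denom_ne θ w)).ne'
  by_cases hx : w.re = 0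
  · exact ⟨0, key 0 (by simp [hx])⟩
  · set v : ℂ := ⟨(1 - w.re ^ 2 - w.im ^ 2) / 2, -w.re⟩ with hv
    have hv0 : v ≠ 0 := by
      intro h
      exact hx (by simpa [hv, Complex.ext_iff] using congrArg Complex.im h)
    have habs : ‖v‖ ≠ 0 := by simpa using hv0
    refine ⟨v.arg / 2, key _ ?_⟩
    have hcs : cos (v.arg / 2) * sin (v.arg / 2) = sin v.arg / 2 := by
      rw [show v.arg = 2 * (v.arg / 2) by ring, Real.sin_two_mul]
      rw [show 2 * (v.arg / 2) / 2 = v.arg / 2 by ring]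
      ring
    have hc2 : cos (v.arg / 2) ^ 2 - sin (v.arg / 2) ^ 2 = cos v.arg := by
      rw [show v.arg = 2 * (v.arg / 2) by ring, Real.cos_two_mul]
      rw [show 2 * (v.arg / 2) / 2 = v.arg / 2 by ring]
      nlinarith [Real.sin_sq_add_cos_sq (v.arg / 2)]
    rw [hcs, hc2, Complex.sin_arg, Complex.cos_arg hv0]
    have : v.im = -w.re := rfl
    have hre : v.re = (1 - w.re ^ 2 - w.im ^ 2) / 2 := rfl
    rw [this, hre]
    field_simp
    ring

lemma rot_half_pi (z : ℍ) (hz : z.re = 0) :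
    (rotM (π / 2) • z).re = 0 ∧ (rotM (π / 2) • z).im = (z.im)⁻¹ := by
  have hco : ((rotM (π / 2) • z : ℍ) : ℂ) = -((z : ℂ))⁻¹ := by
    rw [rotM_smul]
    simp [Real.cos_pi_div_two, Real.sin_pi_div_two, neg_div, div_neg, one_div]
  have hns : Complex.normSq (z : ℂ) = z.im ^ 2 := by
    rw [Complex.normSq_apply]
    simp [coe_re, coe_im, hz]
    ring
  constructor
  · rw [← coe_re, hco]
    simp [Complex.inv_re, coe_re, hz]
  · rw [← coe_im, hco]
    simp only [Complex.neg_im, Complex.inv_im, coe_im, hns]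
    field_simp [z.im_ne_zero]

lemma exists_norm (A D : ℍ) :
    ∃ g : ℍ → ℍ, Isometry g ∧ g A = I ∧ (g D).re = 0 ∧ 1 ≤ (g D).im := by
  set a : { x : ℝ // 0 < x } := ⟨(A.im)⁻¹, by positivity⟩ with ha
  set g₁ : ℍ → ℍ := fun z => a • ((-A.re) +ᵥ z) with hg₁def
  have hg₁ : Isometry g₁ := (isometry_pos_mul a).comp (isometry_real_vadd (-A.re))
  have hg₁A : g₁ A = I := by
    ext
    rw [hg₁def]
    simp only [coe_pos_real_smul, coe_vadd, coe_I]
    rw [Complex.real_smul]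
    rw [show ((-A.re : ℝ) : ℂ) + (A : ℂ) = (A.im : ℝ) * Complex.I by
      rw [← re_add_im A]; push_cast; ring]
    rw [← mul_assoc, ← Complex.ofReal_mul, inv_mul_cancel₀ A.im_ne_zero]
    simp
  obtain ⟨θ, hθ⟩ := exists_rot_re_zero (g₁ D)
  set g₂ : ℍ → ℍ := fun z => rotM θ • g₁ z with hg₂def
  have hg₂ : Isometry g₂ := (isometry_smul ℍ (rotM θ)).comp hg₁
  have hg₂A : g₂ A = I := by rw [hg₂def]; simp only [hg₁A, rotM_fix_I]
  by_cases him : 1 ≤ (g₂ D).im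
  · exact ⟨g₂, hg₂, hg₂A, hθ, him⟩
  · obtain ⟨hre3, him3⟩ := rot_half_pi (g₂ D) hθ
    refine ⟨fun z => rotM (π / 2) • g₂ z, (isometry_smul ℍ _).comp hg₂, ?_, hre3, ?_⟩
    · simp only [hg₂A, rotM_fix_I]
    · rw [him3]
      have h1 : 0 < (g₂ D).im := (g₂ D).im_pos
      have h2 : (g₂ D).im ≤ 1 := le_of_not_ge him
      exact (one_le_inv₀ h1).2 h2

lemma Bcoord (s u p q : ℝ) (hq : 0 < q) (hu : 0 < u)
    (h1 : cosh s = (p ^ 2 + 1 + q ^ 2) / (2 * q))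
    (h2 : cosh (s + u) = (p ^ 2 + q ^ 2 + exp u ^ 2) / (2 * q * exp u)) :
    p = 0 ∧ q = (exp s)⁻¹ := by
  have hS : (0:ℝ) < exp s := exp_pos s
  have hE : (1:ℝ) < exp u := by rw [← exp_zero]; exact exp_lt_exp.2 hu
  simp only [Real.cosh_eq, neg_add, Real.exp_add, Real.exp_neg] at h1 h2
  have hA1 : q * (exp s ^ 2 + 1) = exp s * (p ^ 2 + 1 + q ^ 2) := by
    field_simp at h1
    linarith
  have hA2 : q * (exp s ^ 2 * exp u ^ 2 + 1) = exp s * (p ^ 2 + q ^ 2 + exp u ^ 2) := by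
    field_simp at h2
    nlinarith [h2]
  have h4 : (q * exp s - 1) * (exp s * (exp u ^ 2 - 1)) = 0 := by linear_combination hA2 - hA1
  have h3 : q * exp s = 1 := by
    rcases mul_eq_zero.1 h4 with h | h
    · linarith
    · exfalso
      rcases mul_eq_zero.1 h with h | h
      · linarith
      · nlinarith
  have hp : exp s * p ^ 2 = 0 := by linear_combination -hA1 + (exp s - q) * h3
  have hp0 : p = 0 := by
    have := (mul_eq_zero.1 hp).resolve_left hS.ne'
    exact pow_eq_zero_iff (n := 2) (by norm_num) |>.1 this
  refine ⟨hp0, ?_⟩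
  field_simp
  linarith

lemma keyalg (s u x y : ℝ) (hs : 0 < s) (hu : 0 < u) (hy : 0 < y)
    (h1 : cosh (s + u) ≤ (x ^ 2 + ((exp s)⁻¹) ^ 2 + y ^ 2) / (2 * (exp s)⁻¹ * y))
    (h2 : cosh (2 * s) ≤ (x ^ 2 + y ^ 2 + exp u ^ 2) / (2 * y * exp u)) :
    cosh u + 2 * sinh s ^ 3 / sinh (u + s) ≤ (x ^ 2 + 1 + y ^ 2) / (2 * y) := by
  have hsu : 0 < sinh (u + s) := sinh_pos_iff.2 (by linarith)
  have hss : 0 < sinh s := sinh_pos_iff.2 hs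
  have hsu' : 0 ≤ sinh u := by
    rw [← Real.sinh_zero]
    exact sinh_le_sinh.2 hu.le
  have stewart : ((x ^ 2 + 1 + y ^ 2) / (2 * y)) * sinh (u + s)
      = ((x ^ 2 + ((exp s)⁻¹) ^ 2 + y ^ 2) / (2 * (exp s)⁻¹ * y)) * sinh u
        + ((x ^ 2 + y ^ 2 + exp u ^ 2) / (2 * y * exp u)) * sinh s := by
    simp only [Real.sinh_eq, neg_add, exp_add, exp_neg]
    field_simp
    ring
  have ident : cosh (s + u) * sinh u + cosh (2 * s) * sinh s
      = cosh u * sinh (u + s) + 2 * sinh s ^ 3 := by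
    simp only [Real.cosh_eq, Real.sinh_eq, neg_add, exp_add, exp_neg, two_mul]
    field_simp
    ring
  have main : cosh u * sinh (u + s) + 2 * sinh s ^ 3
      ≤ ((x ^ 2 + 1 + y ^ 2) / (2 * y)) * sinh (u + s) := by
    nlinarith [mul_le_mul_of_nonneg_right h1 hsu', mul_le_mul_of_nonneg_right h2 hss.le]
  rw [show cosh u + 2 * sinh s ^ 3 / sinh (u + s)
      = (cosh u * sinh (u + s) + 2 * sinh s ^ 3) / sinh (u + s) by field_simp]
  rw [div_le_iff₀ hsu]
  exact main

lemma finishlem (s a u : ℝ) (hs : 0 < s) (hu : 0 ≤ u) (ha : 0 ≤ a)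
    (key : cosh u + 2 * sinh s ^ 3 / sinh (u + s) ≤ cosh a) :
    cosh a - cosh u > 2 * sinh s ^ 3 * (sinh (a + s))⁻¹ ∧ u < a := by
  have hsu : 0 < sinh (u + s) := sinh_pos_iff.2 (by linarith)
  have hss : 0 < sinh s := sinh_pos_iff.2 hs
  have hpos : 0 < 2 * sinh s ^ 3 / sinh (u + s) := by positivity
  have hua : u < a := by
    have hca : cosh u < cosh a := by linarith
    have := cosh_lt_cosh.1 hca
    rwa [abs_of_nonneg hu, abs_of_nonneg ha] at this
  have h3 : sinh (u + s) < sinh (a + s) := sinh_lt_sinh.2 (by linarith)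
  refine ⟨?_, hua⟩
  have h4 : 2 * sinh s ^ 3 / sinh (a + s) < 2 * sinh s ^ 3 / sinh (u + s) :=
    div_lt_div_of_pos_left (by positivity) hsu h3
  have : 2 * sinh s ^ 3 * (sinh (a + s))⁻¹ = 2 * sinh s ^ 3 / sinh (a + s) := by ring
  linarith [this ▸ h4]

/-- Let `BCD` be a triangle in the hyperbolic plane with `CD ≥ ε`, `BD ≤ BC`,
and let `A` lie on the segment `BD` with `AB = ε/2`. Then
`cosh(AC) − cosh(AD) > 2 sinh³(ε/2)·csch(AC + ε/2)`; in particular `AC > AD`. -/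
theorem stmt10 (A B C D : UpperHalfPlane) (ε : ℝ) (hε : 0 < ε)
    (hCD : ε ≤ dist C D)
    (hBD : dist B D ≤ dist B C)
    (hA : dist B A + dist A D = dist B D)
    (hAB : dist A B = ε / 2) :
    cosh (dist A C) - cosh (dist A D) >
      2 * sinh (ε / 2) ^ 3 * (sinh (dist A C + ε / 2))⁻¹ ∧
    dist A D < dist A C := by
  obtain ⟨g, hg, hgA, hgDre, hgDim⟩ := exists_norm A D
  have hs0 : 0 < ε / 2 := by linarith
  have dAC : dist A C = dist I (g C) := by rw [← hgA, hg.dist_eq]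
  have dAD : dist A D = dist I (g D) := by rw [← hgA, hg.dist_eq]
  have dBC : dist B C = dist (g B) (g C) := (hg.dist_eq B C).symm
  have dCD : dist C D = dist (g C) (g D) := (hg.dist_eq C D).symm
  have dBD : dist B D = dist (g B) (g D) := (hg.dist_eq B D).symm
  have dAB : dist A B = dist I (g B) := by rw [← hgA, hg.dist_eq]
  have hdBA : dist B A = ε / 2 := by rw [dist_comm]; exact hAB
  have hBD' : dist B D = ε / 2 + dist A D := by rw [← hA, hdBA]
  have mono : ∀ a b : ℝ, 0 ≤ a → a ≤ b → cosh a ≤ cosh b := fun a b ha hab =>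
    cosh_le_cosh.2 (by rwa [abs_of_nonneg ha, abs_of_nonneg (ha.trans hab)])
  have key : cosh (dist A D) + 2 * sinh (ε / 2) ^ 3 / sinh (dist A D + ε / 2)
      ≤ cosh (dist A C) := by
    by_cases hu0 : dist A D = 0
    · have hAD : A = D := dist_eq_zero.1 hu0
      have hACD : dist C D = dist A C := by rw [← hAD, dist_comm]
      have hAC : ε ≤ dist A C := hACD ▸ hCD
      have h1 : cosh ε ≤ cosh (dist A C) := mono _ _ hε.le hAC
      have hss : sinh (ε / 2) ≠ 0 := (sinh_pos_iff.2 hs0).ne'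
      have e1 : 2 * sinh (ε / 2) ^ 3 / sinh (ε / 2) = 2 * sinh (ε / 2) ^ 2 := by
        field_simp
      have e2 : cosh ε = 1 + 2 * sinh (ε / 2) ^ 2 := by
        have h := Real.cosh_sq (ε / 2)
        have h2 := Real.cosh_two_mul (ε / 2)
        rw [show 2 * (ε / 2) = ε by ring] at h2
        linarith
      rw [hu0, zero_add, Real.cosh_zero, e1]
      linarith
    · have hu : 0 < dist A D := lt_of_le_of_ne dist_nonneg (Ne.symm hu0)
      have hId : dist I (g D) = Real.log (g D).im := by
        rw [dist_of_re_eq (by rw [I_re, hgDre]), I_im, Real.log_one, Real.dist_eq]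
        rw [abs_sub_comm, sub_zero, abs_of_nonneg (Real.log_nonneg hgDim)]
      have hexp : exp (dist A D) = (g D).im := by
        rw [dAD, hId, exp_log (by linarith : (0:ℝ) < (g D).im)]
      have hc1 : cosh (ε / 2) = ((g B).re ^ 2 + 1 + (g B).im ^ 2) / (2 * (g B).im) := by
        rw [← hAB, dAB, cosh_dist', I_re, I_im]
        ring
      have hc2 : cosh (ε / 2 + dist A D)
          = ((g B).re ^ 2 + (g B).im ^ 2 + exp (dist A D) ^ 2)
            / (2 * (g B).im * exp (dist A D)) := by
        rw [← hBD', dBD, cosh_dist', hgDre, hexp]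
        ring
      obtain ⟨hp0, hq⟩ := Bcoord (ε / 2) (dist A D) (g B).re (g B).im (g B).im_pos hu hc1 hc2
      have hcA : cosh (dist A C) = ((g C).re ^ 2 + 1 + (g C).im ^ 2) / (2 * (g C).im) := by
        rw [dAC, cosh_dist', I_re, I_im]; ring
      have hcB : cosh (dist B C)
          = ((g C).re ^ 2 + ((exp (ε / 2))⁻¹) ^ 2 + (g C).im ^ 2)
            / (2 * (exp (ε / 2))⁻¹ * (g C).im) := by
        rw [dBC, cosh_dist', hp0, hq]
        ring
      have hcD : cosh (dist C D)
          = ((g C).re ^ 2 + (g C).im ^ 2 + exp (dist A D) ^ 2)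
            / (2 * (g C).im * exp (dist A D)) := by
        rw [dCD, cosh_dist', hgDre, hexp]
        ring
      have h1 : cosh (ε / 2 + dist A D)
          ≤ ((g C).re ^ 2 + ((exp (ε / 2))⁻¹) ^ 2 + (g C).im ^ 2)
            / (2 * (exp (ε / 2))⁻¹ * (g C).im) := by
        rw [← hcB]
        exact mono _ _ (by positivity) (hBD' ▸ hBD)
      have h2 : cosh (2 * (ε / 2))
          ≤ ((g C).re ^ 2 + (g C).im ^ 2 + exp (dist A D) ^ 2)
            / (2 * (g C).im * exp (dist A D)) := by
        rw [← hcD, show 2 * (ε / 2) = ε by ring]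
        exact mono _ _ hε.le hCD
      have key0 := keyalg (ε / 2) (dist A D) (g C).re (g C).im hs0 hu (g C).im_pos h1 h2
      rw [hcA]
      exact key0
  exact finishlem (ε / 2) (dist A C) (dist A D) hs0 dist_nonneg dist_nonneg key
end
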